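/- Let N be a positive integer and α, β real numbers with α > -1 and β > -1. Then for every integer x with 0 ≤ x ≤ N, Q_N(x; α, β, N) = (-N-β)_x / (α+1)_x. -/
import Mathlib

open MeasureTheory Finset

/-- Rising factorial (Pochhammer symbol) `(a)_k = a(a+1)⋯(a+k-1)`. -/
noncomputable def poch (a : ℝ) (k : ℕ) : ℝ := ∏ i ∈ Finset.range k, (a + i)

/-- Hahn polynomial
`Q_n(x; α, β, N) = Σ_{k=0}^n ((-n)_k (n+α+β+1)_k (-x)_k / ((α+1)_k (-N)_k k!))`. -/
noncomputable def hahnQ (n : ℕ) (x : ℝ) (α β : ℝ) (N : ℕ) : ℝ :=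
  ∑ k ∈ Finset.range (n + 1),
    poch (-(n : ℝ)) k * poch ((n : ℝ) + α + β + 1) k * poch (-x) k /
      (poch (α + 1) k * poch (-(N : ℝ)) k * (k.factorial : ℝ))

lemma poch_zero (a : ℝ) : poch a 0 = 1 := by simp [poch]

lemma poch_succ (a : ℝ) (k : ℕ) : poch a (k + 1) = poch a k * (a + k) := by
  simp [poch, Finset.prod_range_succ]

lemma poch_succ_left (a : ℝ) (k : ℕ) : poch a (k + 1) = a * poch (a + 1) k := by
  rw [poch, Finset.prod_range_succ']
  simp only [poch]
  rw [mul_comm]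
  congr 1
  · norm_num
  · apply Finset.prod_congr rfl
    intro i _
    push_cast
    ring

lemma poch_pos {c : ℝ} (hc : 0 < c) (k : ℕ) : 0 < poch c k := by
  apply Finset.prod_pos
  intro i _
  exact add_pos_of_pos_of_nonneg hc (Nat.cast_nonneg i)

lemma poch_pred (a : ℝ) (k : ℕ) :
    poch (a - 1) (k + 1) = poch a (k + 1) - (k + 1) * poch a k := by
  have h1 : poch (a - 1) (k + 1) = (a - 1) * poch a k := by
    have := poch_succ_left (a - 1) k
    rwa [sub_add_cancel] at this
  rw [h1, poch_succ]
  ring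

lemma poch_neg_nat_eq_zero {x k : ℕ} (h : x < k) : poch (-(x : ℝ)) k = 0 := by
  apply Finset.prod_eq_zero (Finset.mem_range.mpr h)
  simp

lemma poch_neg_nat_ne_zero {N k : ℕ} (h : k ≤ N) : poch (-(N : ℝ)) k ≠ 0 := by
  apply Finset.prod_ne_zero_iff.mpr
  intro i hi
  have hi' : i < k := Finset.mem_range.mp hi
  have : (i : ℝ) < N := by exact_mod_cast lt_of_lt_of_le hi' h
  intro hz
  have : (-(N:ℝ)) + i < 0 := by linarith
  rw [hz] at this; exact lt_irrefl 0 this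

lemma chu_vandermonde : ∀ (x : ℕ) (b c : ℝ), 0 < c →
    ∑ k ∈ Finset.range (x + 1),
      poch (-(x : ℝ)) k * poch b k / (poch c k * (k.factorial : ℝ))
      = poch (c - b) x / poch c x := by
  intro x
  induction x with
  | zero => intro b c hc; simp [poch]
  | succ x ih =>
    intro b c hc
    have hcx : poch c x ≠ 0 := ne_of_gt (poch_pos hc x)
    have hcx1 : poch c (x + 1) ≠ 0 := ne_of_gt (poch_pos hc (x + 1))
    -- rewrite each term using poch_pred
    have hterm : ∀ k ∈ Finset.range (x + 2),
        poch (-(x + 1 : ℕ) : ℝ) k * poch b k / (poch c k * (k.factorial : ℝ))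
        = poch (-(x : ℝ)) k * poch b k / (poch c k * (k.factorial : ℝ))
          - (k : ℝ) * poch (-(x : ℝ)) (k - 1) * poch b k / (poch c k * (k.factorial : ℝ)) := by
      intro k _
      cases k with
      | zero => simp [poch]
      | succ j =>
        have hp : poch (-(x + 1 : ℕ) : ℝ) (j + 1)
            = poch (-(x : ℝ)) (j + 1) - (j + 1) * poch (-(x : ℝ)) j := by
          have h := poch_pred (-(x : ℝ)) j
          have : (-(x + 1 : ℕ) : ℝ) = -(x : ℝ) - 1 := by push_cast; ring
          rw [this, h]
        rw [hp]
        simp only [Nat.add_sub_cancel]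
        push_cast
        ring
    rw [Finset.sum_congr rfl hterm, Finset.sum_sub_distrib]
    -- first sum: term at x+1 vanishes
    have h1 : ∑ k ∈ Finset.range (x + 2),
        poch (-(x : ℝ)) k * poch b k / (poch c k * (k.factorial : ℝ))
        = poch (c - b) x / poch c x := by
      rw [Finset.sum_range_succ]
      rw [poch_neg_nat_eq_zero (Nat.lt_succ_self x)]
      simp [ih b c hc]
    -- second sum: reindex
    have h2 : ∑ k ∈ Finset.range (x + 2),
        (k : ℝ) * poch (-(x : ℝ)) (k - 1) * poch b k / (poch c k * (k.factorial : ℝ))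
        = b / c * (poch (c - b) x / poch (c + 1) x) := by
      rw [Finset.sum_range_succ']
      simp only [Nat.cast_zero, zero_mul, zero_div, add_zero, Nat.add_sub_cancel]
      have hre : ∀ j ∈ Finset.range (x + 1),
          ((j + 1 : ℕ) : ℝ) * poch (-(x : ℝ)) j * poch b (j + 1)
            / (poch c (j + 1) * ((j + 1).factorial : ℝ))
          = b / c * (poch (-(x : ℝ)) j * poch (b + 1) j / (poch (c + 1) j * (j.factorial : ℝ))) := by
        intro j _
        rw [poch_succ_left b j, poch_succ_left c j, Nat.factorial_succ]
        have hcj : poch (c + 1) j ≠ 0 := ne_of_gt (poch_pos (by linarith) j)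
        have hfj : (j.factorial : ℝ) ≠ 0 := Nat.cast_ne_zero.mpr (Nat.factorial_ne_zero j)
        have hc' : c ≠ 0 := ne_of_gt hc
        have hj1 : ((j : ℝ) + 1) ≠ 0 := by positivity
        push_cast
        field_simp
      rw [Finset.sum_congr rfl hre, ← Finset.mul_sum]
      rw [ih (b + 1) (c + 1) (by linarith)]
      congr 2
      ring
    rw [h1, h2]
    -- final algebra
    have hc1x : poch (c + 1) x ≠ 0 := ne_of_gt (poch_pos (by linarith) x)
    have e1 : poch c (x + 1) = c * poch (c + 1) x := poch_succ_left c x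
    have e2 : poch c (x + 1) = poch c x * (c + x) := poch_succ c x
    have e3 : poch (c - b) (x + 1) = poch (c - b) x * (c - b + x) := poch_succ (c - b) x
    rw [e3, e1]
    have hc' : c ≠ 0 := ne_of_gt hc
    have e4 : poch c x * (c + x) = c * poch (c + 1) x := by rw [← e2, e1]
    have key : poch (c - b) x / poch c x
        = poch (c - b) x * (c + x) / (c * poch (c + 1) x) := by
      rw [div_eq_div_iff hcx (by positivity)]
      linear_combination -poch (c - b) x * e4
    rw [key]
    field_simp
    ring

theorem hahn_top_degree_value (N : ℕ) (hN : 0 < N) (α β : ℝ) (hα : α > -1) (hβ : β > -1)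
    (x : ℕ) (hx : x ≤ N) :
    hahnQ N (x : ℝ) α β N = poch (-(N : ℝ) - β) x / poch (α + 1) x := by
  have hc : (0:ℝ) < α + 1 := by linarith
  have hstep : hahnQ N (x : ℝ) α β N
      = ∑ k ∈ Finset.range (N + 1),
          poch (-(x : ℝ)) k * poch ((N : ℝ) + α + β + 1) k
            / (poch (α + 1) k * (k.factorial : ℝ)) := by
    unfold hahnQ
    apply Finset.sum_congr rfl
    intro k hk
    have hk' : k ≤ N := Nat.lt_succ_iff.mp (Finset.mem_range.mp hk)
    have hNk : poch (-(N : ℝ)) k ≠ 0 := poch_neg_nat_ne_zero hk'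
    have hak : poch (α + 1) k ≠ 0 := ne_of_gt (poch_pos hc k)
    have hfk : (k.factorial : ℝ) ≠ 0 := Nat.cast_ne_zero.mpr (Nat.factorial_ne_zero k)
    field_simp
  rw [hstep]
  have hsub : ∑ k ∈ Finset.range (N + 1),
      poch (-(x : ℝ)) k * poch ((N : ℝ) + α + β + 1) k
        / (poch (α + 1) k * (k.factorial : ℝ))
      = ∑ k ∈ Finset.range (x + 1),
          poch (-(x : ℝ)) k * poch ((N : ℝ) + α + β + 1) k
            / (poch (α + 1) k * (k.factorial : ℝ)) := by
    symm
    apply Finset.sum_subset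
    · intro k hk
      simp only [Finset.mem_range] at *
      omega
    · intro k _ hk
      simp only [Finset.mem_range, not_lt] at hk
      rw [poch_neg_nat_eq_zero (by omega : x < k)]
      simp
  rw [hsub, chu_vandermonde x ((N : ℝ) + α + β + 1) (α + 1) hc]
  congr 2
  ring
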